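/- Let Q be a finite quiver, W a finite-dimensional representation, σ a weight. Among subrepresentations W' of W maximizing σ(dim W'), there is a unique minimal one (contained in every other optimal σ-witness) and a unique maximal one (containing every other optimal σ-witness). -/

import Mathlib

open Module

/-- A family of subspaces is a subrepresentation of the representation given by
the vertex spaces `Wsp` and the arrow maps `Wmap`. -/
def IsSubrep {ι κ : Type*} {F : Type*} [Field F] {Wsp : ι → Type*}
    [∀ i, AddCommGroup (Wsp i)] [∀ i, Module F (Wsp i)]
    (t h : κ → ι) (Wmap : ∀ a : κ, Wsp (t a) →ₗ[F] Wsp (h a))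
    (W' : ∀ i, Submodule F (Wsp i)) : Prop :=
  ∀ a : κ, (W' (t a)).map (Wmap a) ≤ W' (h a)

/-- `σ(dim W') = Σ_x σ(x)·dim W'(x)`. -/
noncomputable def sigmaDim {ι : Type*} [Fintype ι] {F : Type*} [Field F] {Wsp : ι → Type*}
    [∀ i, AddCommGroup (Wsp i)] [∀ i, Module F (Wsp i)]
    (σ : ι → ℤ) (W' : ∀ i, Submodule F (Wsp i)) : ℤ :=
  ∑ i, σ i * (finrank F (W' i) : ℤ)

/-- `W'` is an optimal σ-witness: a subrepresentation maximizing `σ(dim ·)`. -/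
def IsOptimalWitness {ι κ : Type*} [Fintype ι] {F : Type*} [Field F] {Wsp : ι → Type*}
    [∀ i, AddCommGroup (Wsp i)] [∀ i, Module F (Wsp i)]
    (t h : κ → ι) (Wmap : ∀ a : κ, Wsp (t a) →ₗ[F] Wsp (h a))
    (σ : ι → ℤ) (W' : ∀ i, Submodule F (Wsp i)) : Prop :=
  IsSubrep t h Wmap W' ∧
    ∀ W'' : ∀ i, Submodule F (Wsp i), IsSubrep t h Wmap W'' →
      sigmaDim σ W'' ≤ sigmaDim σ W'

/-!
The pointwise intersection and sum of two subrepresentations are subrepresentations, and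
`dim (A ∩ B) + dim (A + B) = dim A + dim B` at every vertex. Hence, if `A` and `B` are optimal,
neither `σ(dim (A ∩ B))` nor `σ(dim (A + B))` can drop below the optimum, so the optimal
σ-witnesses form a nonempty sublattice of the lattice of families of subspaces. That lattice has
no infinite chains, so this sublattice contains its infimum and its supremum.
-/

instance Pi.wellFoundedGT {ι : Type*} [Finite ι] {α : ι → Type*} [∀ i, Preorder (α i)]
    [∀ i, WellFoundedGT (α i)] : WellFoundedGT (∀ i, α i) :=
  StrictAnti.wellFoundedGT (β := ∀ i, (α i)ᵒᵈ) (f := fun x i => OrderDual.toDual (x i))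
    fun _ _ hlt => hlt

theorem InfClosed.sInf_mem_of_wellFoundedLT {α : Type*} [CompleteLattice α] [WellFoundedLT α]
    {s : Set α} (hne : s.Nonempty) (hs : InfClosed s) : sInf s ∈ s :=
  CompleteLattice.WellFoundedGT.isSupClosedCompact αᵒᵈ inferInstance _ hne hs.dual

theorem SupClosed.sSup_mem_of_wellFoundedGT {α : Type*} [CompleteLattice α] [WellFoundedGT α]
    {s : Set α} (hne : s.Nonempty) (hs : SupClosed s) : sSup s ∈ s :=
  CompleteLattice.WellFoundedGT.isSupClosedCompact α inferInstance s hne hs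

section Subrep

variable {F ι κ : Type*} [Field F] {Wsp : ι → Type*} [∀ i, AddCommGroup (Wsp i)]
  [∀ i, Module F (Wsp i)] {t h : κ → ι} {Wmap : ∀ a : κ, Wsp (t a) →ₗ[F] Wsp (h a)}
  {A B : ∀ i, Submodule F (Wsp i)}

theorem isSubrep_bot : IsSubrep t h Wmap ⊥ :=
  fun a => by simp

theorem IsSubrep.inf (hA : IsSubrep t h Wmap A) (hB : IsSubrep t h Wmap B) :
    IsSubrep t h Wmap (A ⊓ B) :=
  fun a => le_inf ((Submodule.map_mono inf_le_left).trans (hA a))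
    ((Submodule.map_mono inf_le_right).trans (hB a))

theorem IsSubrep.sup (hA : IsSubrep t h Wmap A) (hB : IsSubrep t h Wmap B) :
    IsSubrep t h Wmap (A ⊔ B) :=
  fun a => (Submodule.map_sup _ _ _).trans_le (sup_le_sup (hA a) (hB a))

variable [Fintype ι] [∀ i, FiniteDimensional F (Wsp i)] {σ : ι → ℤ}

variable (σ) in
theorem sigmaDim_le_sum_abs_mul_finrank (W' : ∀ i, Submodule F (Wsp i)) :
    sigmaDim σ W' ≤ ∑ i, |σ i| * (finrank F (Wsp i) : ℤ) :=
  Finset.sum_le_sum fun i _ => mul_le_mul (le_abs_self _)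
    (by exact_mod_cast (W' i).finrank_le) (Nat.cast_nonneg _) (abs_nonneg _)

variable (σ) in
theorem sigmaDim_inf_add_sigmaDim_sup (A B : ∀ i, Submodule F (Wsp i)) :
    sigmaDim σ (A ⊓ B) + sigmaDim σ (A ⊔ B) = sigmaDim σ A + sigmaDim σ B := by
  simp only [sigmaDim, ← Finset.sum_add_distrib, ← mul_add]
  refine Finset.sum_congr rfl fun i _ => congrArg (σ i * ·) ?_
  exact_mod_cast (add_comm _ _).trans (Submodule.finrank_sup_add_finrank_inf_eq (A i) (B i))

variable (t h Wmap σ) in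
theorem exists_isOptimalWitness : ∃ W', IsOptimalWitness t h Wmap σ W' := by
  set values := sigmaDim σ '' {W' | IsSubrep t h Wmap W'}
  have hne : values.Nonempty := ⟨_, ⊥, isSubrep_bot, rfl⟩
  have hbdd : BddAbove values := ⟨_, by
    rintro _ ⟨W', -, rfl⟩
    exact sigmaDim_le_sum_abs_mul_finrank σ W'⟩
  obtain ⟨W', hW', hW'max⟩ := Int.csSup_mem hne hbdd
  exact ⟨W', hW', fun W'' hW'' => hW'max ▸ le_csSup hbdd ⟨W'', hW'', rfl⟩⟩

theorem IsOptimalWitness.inf (hA : IsOptimalWitness t h Wmap σ A)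
    (hB : IsOptimalWitness t h Wmap σ B) : IsOptimalWitness t h Wmap σ (A ⊓ B) := by
  refine ⟨hA.1.inf hB.1, fun W'' hW'' => ?_⟩
  have hsum := sigmaDim_inf_add_sigmaDim_sup σ A B
  have hsup := hB.2 _ (hA.1.sup hB.1)
  linarith [hA.2 W'' hW'']

theorem IsOptimalWitness.sup (hA : IsOptimalWitness t h Wmap σ A)
    (hB : IsOptimalWitness t h Wmap σ B) : IsOptimalWitness t h Wmap σ (A ⊔ B) := by
  refine ⟨hA.1.sup hB.1, fun W'' hW'' => ?_⟩
  have hsum := sigmaDim_inf_add_sigmaDim_sup σ A B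
  have hinf := hA.2 _ (hA.1.inf hB.1)
  linarith [hB.2 W'' hW'']

end Subrep

theorem exists_minimal_and_maximal_optimal_witness_general
    {F : Type*} [Field F] {ι κ : Type*} [Fintype ι]
    {Wsp : ι → Type*} [∀ i, AddCommGroup (Wsp i)] [∀ i, Module F (Wsp i)]
    [∀ i, FiniteDimensional F (Wsp i)]
    (t h : κ → ι) (Wmap : ∀ a : κ, Wsp (t a) →ₗ[F] Wsp (h a))
    (σ : ι → ℤ) :
    (∃ Wmin : ∀ i, Submodule F (Wsp i), IsOptimalWitness t h Wmap σ Wmin ∧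
      ∀ W' : ∀ i, Submodule F (Wsp i), IsOptimalWitness t h Wmap σ W' →
        ∀ i, Wmin i ≤ W' i) ∧
    (∃ Wmax : ∀ i, Submodule F (Wsp i), IsOptimalWitness t h Wmap σ Wmax ∧
      ∀ W' : ∀ i, Submodule F (Wsp i), IsOptimalWitness t h Wmap σ W' →
        ∀ i, W' i ≤ Wmax i) := by
  set optimal := {W' | IsOptimalWitness t h Wmap σ W'}
  have hne : optimal.Nonempty := exists_isOptimalWitness t h Wmap σ
  have hinf : InfClosed optimal := fun _ hA _ hB => hA.inf hB
  have hsup : SupClosed optimal := fun _ hA _ hB => hA.sup hB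
  exact ⟨⟨sInf optimal, hinf.sInf_mem_of_wellFoundedLT hne,
      fun _ hW' => sInf_le (s := optimal) hW'⟩,
    ⟨sSup optimal, hsup.sSup_mem_of_wellFoundedGT hne,
      fun _ hW' => le_sSup (s := optimal) hW'⟩⟩

theorem exists_minimal_and_maximal_optimal_witness
    {F : Type*} [Field F] {ι κ : Type*} [Fintype ι] [Fintype κ]
    {Wsp : ι → Type*} [∀ i, AddCommGroup (Wsp i)] [∀ i, Module F (Wsp i)]
    [∀ i, FiniteDimensional F (Wsp i)]
    (t h : κ → ι) (Wmap : ∀ a : κ, Wsp (t a) →ₗ[F] Wsp (h a))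
    (σ : ι → ℤ) :
    (∃ Wmin : ∀ i, Submodule F (Wsp i), IsOptimalWitness t h Wmap σ Wmin ∧
      ∀ W' : ∀ i, Submodule F (Wsp i), IsOptimalWitness t h Wmap σ W' →
        ∀ i, Wmin i ≤ W' i) ∧
    (∃ Wmax : ∀ i, Submodule F (Wsp i), IsOptimalWitness t h Wmap σ Wmax ∧
      ∀ W' : ∀ i, Submodule F (Wsp i), IsOptimalWitness t h Wmap σ W' →
        ∀ i, W' i ≤ Wmax i) :=
  exists_minimal_and_maximal_optimal_witness_general t h Wmap σ
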